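/- Perspective function bound for matrices: let A be positive definite and B positive semidefinite n×n matrices with mA ≤ B ≤ MA (0 < m < M), and f twice differentiable on [m,M] with α ≤ f'' ≤ β. Then (β/2)(A♮₂B + MmA - (M+m)B) ≤ P_f(A|B) - L_f(A|B) ≤ (α/2)(A♮₂B + MmA - (M+m)B) in the Loewner order, where P_f(A|B) = A^{1/2} f(A^{-1/2} B A^{-1/2}) A^{1/2}, A♮₂B = A^{1/2}(A^{-1/2}BA^{-1/2})² A^{1/2}, and L_f(A|B) = ((B - mA)f(M) + (MA - B)f(m))/(M-m). -/

import Mathlib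

/-
Conjugating by `√A⁻¹` turns `m A ≤ B ≤ M A` into `m ≤ C ≤ M` for `C = √A⁻¹ B √A⁻¹`, so the
spectrum of `C` lies in `[m, M]`. By monotonicity of the functional calculus and of conjugation
by `√A`, the claim then reduces to the scalar inequalities
`β/2 (x - m)(x - M) ≤ f x - ℓ x ≤ α/2 (x - m)(x - M)` on `[m, M]`, where `ℓ` is the chord of `f`
over `[m, M]`; these are the chord inequalities for the convex functions `f - α x²/2` and
`β x²/2 - f`.
-/

open Matrix ComplexOrder

namespace Matrix.PosSemidef

/-- The positive semidefinite square root of a positive semidefinite matrix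
(the definition Mathlib had in December 2024, since removed). -/
noncomputable def sqrt {𝕜 : Type*} [RCLike 𝕜] {n : Type*} [Fintype n] [DecidableEq n]
    {A : Matrix n n 𝕜} (hA : A.PosSemidef) : Matrix n n 𝕜 :=
  hA.1.eigenvectorUnitary.1 * diagonal ((↑) ∘ (√·) ∘ hA.1.eigenvalues) *
  (star hA.1.eigenvectorUnitary : Matrix n n 𝕜)

end Matrix.PosSemidef

open scoped MatrixOrder

namespace Matrix

variable {𝕜 : Type*} [RCLike 𝕜] {n : Type*} [Fintype n] [DecidableEq n] {A : Matrix n n 𝕜}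

theorem PosSemidef.sqrt_eq_cfcSqrt (hA : A.PosSemidef) : hA.sqrt = CFC.sqrt A := by
  rw [CFC.sqrt_eq_real_sqrt A hA.nonneg, cfcₙ_eq_cfc, hA.1.cfc_eq]
  rfl

theorem PosSemidef.isSelfAdjoint_sqrt (hA : A.PosSemidef) : IsSelfAdjoint hA.sqrt :=
  hA.sqrt_eq_cfcSqrt ▸ (CFC.sqrt_nonneg A).isSelfAdjoint

theorem PosSemidef.sqrt_mul_sqrt (hA : A.PosSemidef) : hA.sqrt * hA.sqrt = A :=
  hA.sqrt_eq_cfcSqrt ▸ CFC.sqrt_mul_sqrt_self A hA.nonneg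

theorem PosDef.isUnit_det_sqrt (hA : A.PosDef) : IsUnit hA.posSemidef.sqrt.det :=
  (isUnit_iff_isUnit_det _).1 <|
    hA.posSemidef.sqrt_eq_cfcSqrt ▸ (CFC.isUnit_sqrt_iff A hA.posSemidef.nonneg).2 hA.isUnit

end Matrix

open Set

noncomputable def chord (f : ℝ → ℝ) (a b x : ℝ) : ℝ :=
  (b - a)⁻¹ * (f b * (x - a) + f a * (b - x))

theorem ConvexOn.le_chord {f : ℝ → ℝ} {a b x : ℝ} (hf : ConvexOn ℝ (Icc a b) f) (hab : a < b)
    (hx : x ∈ Icc a b) : f x ≤ chord f a b x := by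
  obtain ⟨hax, hxb⟩ := hx
  have hba : 0 < b - a := sub_pos.2 hab
  have h := hf.2 (left_mem_Icc.2 hab.le) (right_mem_Icc.2 hab.le)
    (div_nonneg (sub_nonneg.2 hxb) hba.le) (div_nonneg (sub_nonneg.2 hax) hba.le) (by field)
  have hx : ((b - x) / (b - a)) • a + ((x - a) / (b - a)) • b = x := by
    simp only [smul_eq_mul]; field
  rw [hx] at h
  calc f x ≤ _ := h
    _ = chord f a b x := by simp only [chord, smul_eq_mul]; field

theorem sub_chord_le_of_le_deriv_deriv {f f' f'' : ℝ → ℝ} {a b c x : ℝ} (hab : a < b)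
    (hf : ∀ y ∈ Icc a b, HasDerivWithinAt f (f' y) (Icc a b) y)
    (hf' : ∀ y ∈ Icc a b, HasDerivWithinAt f' (f'' y) (Icc a b) y)
    (hc : ∀ y ∈ Icc a b, c ≤ f'' y) (hx : x ∈ Icc a b) :
    f x - chord f a b x ≤ c / 2 * ((x - a) * (x - b)) := by
  have hsq (y : ℝ) : HasDerivWithinAt (fun y => c / 2 * y ^ 2) (c * y) (Icc a b) y :=
    ((hasDerivAt_pow 2 y).const_mul (c / 2)).hasDerivWithinAt.congr_deriv (by push_cast; ring)
  have hlin (y : ℝ) : HasDerivWithinAt (fun y => c * y) c (Icc a b) y := by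
    simpa using ((hasDerivAt_id y).const_mul c).hasDerivWithinAt
  have hconv : ConvexOn ℝ (Icc a b) (fun y => f y - c / 2 * y ^ 2) :=
    convexOn_of_hasDerivWithinAt2_nonneg (f' := fun y => f' y - c * y)
      (f'' := fun y => f'' y - c) (convex_Icc a b)
      (fun y hy => ((hf y hy).sub (hsq y)).continuousWithinAt)
      (fun y hy => ((hf y (interior_subset hy)).sub (hsq y)).mono interior_subset)
      (fun y hy => ((hf' y (interior_subset hy)).sub (hlin y)).mono interior_subset)
      (fun y hy => sub_nonneg.2 (hc y (interior_subset hy)))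
  have h := hconv.le_chord hab hx
  have hd : (b - a)⁻¹ * (b - a) = 1 := inv_mul_cancel₀ (sub_pos.2 hab).ne'
  simp only [chord] at h ⊢
  linear_combination h - (c / 2 * (x * (a + b) - a * b)) * hd

theorem le_sub_chord_of_deriv_deriv_le {f f' f'' : ℝ → ℝ} {a b c x : ℝ} (hab : a < b)
    (hf : ∀ y ∈ Icc a b, HasDerivWithinAt f (f' y) (Icc a b) y)
    (hf' : ∀ y ∈ Icc a b, HasDerivWithinAt f' (f'' y) (Icc a b) y)
    (hc : ∀ y ∈ Icc a b, f'' y ≤ c) (hx : x ∈ Icc a b) :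
    c / 2 * ((x - a) * (x - b)) ≤ f x - chord f a b x := by
  have h := sub_chord_le_of_le_deriv_deriv (f := -f) (f' := -f') (f'' := -f'') (c := -c) hab
    (fun y hy => (hf y hy).neg) (fun y hy => (hf' y hy).neg) (fun y hy => neg_le_neg (hc y hy)) hx
  simp only [chord, Pi.neg_apply] at h ⊢
  linarith

section StarAlgebra

variable {R : Type*} [TopologicalSpace R] [Ring R] [StarRing R] [Algebra ℝ R]
  [ContinuousFunctionalCalculus ℝ R IsSelfAdjoint]

theorem conjugate_cfc_chord (f : ℝ → ℝ) (m M : ℝ) {a b c t : R} (hc : IsSelfAdjoint c)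
    (ha : t * t = a) (hb : t * c * t = b) :
    t * cfc (chord f m M) c * t = (M - m)⁻¹ • (f M • (b - m • a) + f m • (M • a - b)) := by
  unfold chord
  rw [cfc_const_mul .., cfc_add .., cfc_const_mul .., cfc_const_mul .., cfc_sub .., cfc_sub ..,
    cfc_id' ℝ c, cfc_const m c, cfc_const M c]
  simp only [Algebra.algebraMap_eq_smul_one, mul_add, add_mul, mul_sub, sub_mul, mul_smul_comm,
    smul_mul_assoc, mul_one, ha, hb]

theorem conjugate_cfc_sub_mul_sub (m M : ℝ) {a b c t : R} (hc : IsSelfAdjoint c)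
    (ha : t * t = a) (hb : t * c * t = b) :
    t * cfc (fun x => (x - m) * (x - M)) c * t = t * c ^ 2 * t + (M * m) • a - (M + m) • b := by
  rw [cfc_mul .., cfc_sub .., cfc_sub .., cfc_id' ℝ c, cfc_const m c, cfc_const M c]
  simp only [Algebra.algebraMap_eq_smul_one, sub_mul, mul_sub, smul_mul_assoc, mul_smul_comm,
    one_mul, mul_one, sq, ha, hb]
  module

variable [PartialOrder R] [StarOrderedRing R]

theorem IsSelfAdjoint.conjugate_cfc_le_conjugate_cfc {c t : R} {s : Set ℝ} {g₁ g₂ : ℝ → ℝ}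
    (ht : IsSelfAdjoint t) (hc : spectrum ℝ c ⊆ s) (hg₁ : ContinuousOn g₁ s)
    (hg₂ : ContinuousOn g₂ s) (h : ∀ x ∈ s, g₁ x ≤ g₂ x) :
    t * cfc g₁ c * t ≤ t * cfc g₂ c * t :=
  ht.conjugate_le_conjugate (cfc_mono (fun x hx => h x (hc hx)) (hg₁.mono hc) (hg₂.mono hc))

theorem spectrum_conjugate_subset_Icc [NonnegSpectrumClass ℝ R] {a b s : R} {m M : ℝ}
    (hs : IsSelfAdjoint s) (hb : IsSelfAdjoint b) (hsas : s * a * s = 1) (hma : m • a ≤ b)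
    (hMa : b ≤ M • a) :
    spectrum ℝ (s * b * s) ⊆ Icc m M := by
  have hconj (r : ℝ) : s * (r • a) * s = algebraMap ℝ R r := by
    rw [mul_smul_comm, smul_mul_assoc, hsas, Algebra.algebraMap_eq_smul_one]
  have hsbs : IsSelfAdjoint (s * b * s) := hb.conjugate_self hs
  intro x hx
  exact ⟨(algebraMap_le_iff_le_spectrum hsbs).1 (hconj m ▸ hs.conjugate_le_conjugate hma) x hx,
    (le_algebraMap_iff_spectrum_le hsbs).1 (hconj M ▸ hs.conjugate_le_conjugate hMa) x hx⟩

end StarAlgebra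

theorem perspective_function_bounds_general {n : ℕ} (A B : Matrix (Fin n) (Fin n) ℂ)
    (hA : A.PosDef) (hB : B.PosSemidef) (m M α β : ℝ) (hmM : m < M)
    (hmA : (B - m • A).PosSemidef) (hMA : (M • A - B).PosSemidef)
    (f : ℝ → ℝ)
    (hf : ∀ x ∈ Set.Icc m M,
      HasDerivWithinAt f (derivWithin f (Set.Icc m M) x) (Set.Icc m M) x)
    (hf' : ∀ x ∈ Set.Icc m M, HasDerivWithinAt (derivWithin f (Set.Icc m M))
      (derivWithin (derivWithin f (Set.Icc m M)) (Set.Icc m M) x) (Set.Icc m M) x)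
    (hαβ : ∀ x ∈ Set.Icc m M,
      α ≤ derivWithin (derivWithin f (Set.Icc m M)) (Set.Icc m M) x ∧
        derivWithin (derivWithin f (Set.Icc m M)) (Set.Icc m M) x ≤ β) :
    let S := hA.posSemidef.sqrt
    let C := S⁻¹ * B * S⁻¹
    let P := S * cfc f C * S
    let nat2 := S * C ^ 2 * S
    let L := (M - m)⁻¹ • (f M • (B - m • A) + f m • (M • A - B))
    let K := nat2 + (M * m) • A - (M + m) • B
    ((P - L) - (β / 2) • K).PosSemidef ∧ ((α / 2) • K - (P - L)).PosSemidef := by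
  intro S C P nat2 L K
  have hS : IsSelfAdjoint S := hA.posSemidef.isSelfAdjoint_sqrt
  have hSS : S * S = A := hA.posSemidef.sqrt_mul_sqrt
  have hSdet : IsUnit S.det := hA.isUnit_det_sqrt
  have hSinvA : S⁻¹ * A * S⁻¹ = 1 := by
    rw [← hSS, ← mul_assoc, nonsing_inv_mul S hSdet, one_mul, mul_nonsing_inv S hSdet]
  have hSCS : S * C * S = B := by
    simp only [C, ← mul_assoc, mul_nonsing_inv S hSdet, one_mul]
    exact nonsing_inv_mul_cancel_right _ _ hSdet
  have hSinv : IsSelfAdjoint S⁻¹ := IsHermitian.inv hS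
  have hC : IsSelfAdjoint C := IsSelfAdjoint.conjugate_self hB.1 hSinv
  have hspec : spectrum ℝ C ⊆ Icc m M := spectrum_conjugate_subset_Icc hSinv hB.1 hSinvA hmA hMA
  have hfc : ContinuousOn f (Icc m M) := fun x hx => (hf x hx).continuousWithinAt
  have hchord : Continuous (chord f m M) := by unfold chord; fun_prop
  have hPL : S * cfc (fun x => f x - chord f m M x) C * S = P - L := by
    rw [cfc_sub f (chord f m M) C (hfc.mono hspec), mul_sub, sub_mul,
      conjugate_cfc_chord f m M hC hSS hSCS]
  have hK (c : ℝ) : S * cfc (fun x => c * ((x - m) * (x - M))) C * S = c • K := by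
    rw [cfc_const_mul .., mul_smul_comm, smul_mul_assoc, conjugate_cfc_sub_mul_sub m M hC hSS hSCS]
  refine ⟨?_, ?_⟩ <;> rw [← Matrix.le_iff, ← hPL, ← hK]
  · exact hS.conjugate_cfc_le_conjugate_cfc hspec (by fun_prop) (hfc.sub hchord.continuousOn)
      fun x hx => le_sub_chord_of_deriv_deriv_le hmM hf hf' (fun y hy => (hαβ y hy).2) hx
  · exact hS.conjugate_cfc_le_conjugate_cfc hspec (hfc.sub hchord.continuousOn) (by fun_prop)
      fun x hx => sub_chord_le_of_le_deriv_deriv hmM hf hf' (fun y hy => (hαβ y hy).1) hx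

/-- Perspective function bound: let `A` be positive definite and `B` positive
semidefinite with `m • A ≤ B ≤ M • A` in the Loewner order, `0 < m < M`, and let
`f` be twice differentiable on `[m, M]` with `α ≤ f'' ≤ β` there.  With
`P_f(A|B) = √A · f(√A⁻¹ B √A⁻¹) · √A`, `A ♮₂ B = √A · (√A⁻¹ B √A⁻¹)² · √A` and
`L_f(A|B) = ((B - m A) f M + (M A - B) f m)/(M - m)`, one has
`(β/2)(A ♮₂ B + M m A - (M+m) B) ≤ P_f(A|B) - L_f(A|B)
  ≤ (α/2)(A ♮₂ B + M m A - (M+m) B)` in the Loewner order. -/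
theorem perspective_function_bounds {n : ℕ} (A B : Matrix (Fin n) (Fin n) ℂ)
    (hA : A.PosDef) (hB : B.PosSemidef) (m M α β : ℝ) (hm : 0 < m) (hmM : m < M)
    (hmA : (B - m • A).PosSemidef) (hMA : (M • A - B).PosSemidef)
    (f : ℝ → ℝ)
    (hf : ∀ x ∈ Set.Icc m M,
      HasDerivWithinAt f (derivWithin f (Set.Icc m M) x) (Set.Icc m M) x)
    (hf' : ∀ x ∈ Set.Icc m M, HasDerivWithinAt (derivWithin f (Set.Icc m M))
      (derivWithin (derivWithin f (Set.Icc m M)) (Set.Icc m M) x) (Set.Icc m M) x)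
    (hαβ : ∀ x ∈ Set.Icc m M,
      α ≤ derivWithin (derivWithin f (Set.Icc m M)) (Set.Icc m M) x ∧
        derivWithin (derivWithin f (Set.Icc m M)) (Set.Icc m M) x ≤ β) :
    let S := hA.posSemidef.sqrt
    let C := S⁻¹ * B * S⁻¹
    let P := S * cfc f C * S
    let nat2 := S * C ^ 2 * S
    let L := (M - m)⁻¹ • (f M • (B - m • A) + f m • (M • A - B))
    let K := nat2 + (M * m) • A - (M + m) • B
    ((P - L) - (β / 2) • K).PosSemidef ∧ ((α / 2) • K - (P - L)).PosSemidef :=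
  perspective_function_bounds_general A B hA hB m M α β hmM hmA hMA f hf hf' hαβ
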